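/- arXiv:1105.1842 — 3 statements merged into one kernel-verified Lean document; each statement's English description precedes it below -/
import Mathlib

section
/- Let G and H be finite groups with |G| ≤ |H|, suppose G is not isomorphic to any subgroup of H, and let γ : G → H be any injective map. Then the number of pairs (x, y) ∈ G × G satisfying γ(x·y) = γ(x)·γ(y) is at most (7/9)|G|^2. -/
/-!
Write `q x y = diffQuot γ x y = γ(y)⁻¹ γ(yx)`; for a homomorphism this is `γ x` for every `y`.
If fewer than `2/9` of the pairs are bad for `γ`, then `q x (ty) = q x y` unless `(t, y)` or
`(t, yx)` is bad, so each `q x` has more than `5/9 |G|²` collisions and hence a value `φ x` taken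
on more than `2/3` of `G`. Three such majorities meet, and the cocycle identity
`q (x₁x₂) y = q x₁ y * q x₂ (yx₁)` makes `φ` a homomorphism. Averaging the bad pairs over
columns, `φ x = γ x` for more than `2/3` of the `x`; as `γ` is injective, `φ` is injective on more
than half of `G`, so `ker φ` is trivial and `G` embeds in `H`.
-/

open Finset

section Counting

variable {α β : Type*} [Fintype α]

theorem card_filter_prod_eq_sum_card [Fintype β] (P : α → β → Prop)
    [∀ a b, Decidable (P a b)] :
    #{p : α × β | P p.1 p.2} = ∑ b, #{a | P a b} := by
  simp only [card_filter]
  exact Fintype.sum_prod_type_right _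

theorem exists_mem_mem_mem_of_two_mul_card_lt [DecidableEq α] (s t u : Finset α)
    (h : 2 * Fintype.card α < #s + #t + #u) : ∃ a, a ∈ s ∧ a ∈ t ∧ a ∈ u := by
  have hst := card_union_add_card_inter s t
  have := card_le_univ (s ∪ t)
  obtain ⟨a, ha⟩ := inter_nonempty_of_card_lt_card_add_card (subset_univ (s ∩ t))
    (subset_univ u) (by rw [card_univ]; omega)
  simp only [mem_inter] at ha
  exact ⟨a, ha.1.1, ha.1.2, ha.2⟩

variable [DecidableEq β]

theorem eq_of_card_lt_card_fiber_add_card_fiber (v : α → β) {b c : β}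
    (h : Fintype.card α < #{a | v a = b} + #{a | v a = c}) : b = c := by
  classical
  obtain ⟨a, ha⟩ := inter_nonempty_of_card_lt_card_add_card (subset_univ {a | v a = b})
    (subset_univ {a | v a = c}) (by rwa [card_univ])
  simp only [mem_inter, mem_filter, mem_univ, true_and] at ha
  exact ha.1 ▸ ha.2

theorem exists_two_mul_card_lt_three_mul_card_fiber (v : α → β)
    (h : 5 * Fintype.card α ^ 2 < 9 * ∑ a, #{b | v b = v a}) :
    ∃ c, 2 * Fintype.card α < 3 * #{a | v a = c} := by
  cases isEmpty_or_nonempty α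
  · simp at h
  obtain ⟨a₀, -, hmax⟩ := exists_max_image univ (fun a => #{b | v b = v a}) univ_nonempty
  set m := #{b | v b = v a₀}
  set m' := #{b | ¬ v b = v a₀}
  have hn : m + m' = Fintype.card α := card_filter_add_card_filter_not _
  have h₁ : ∑ a, #{b | v b = v a} ≤ Fintype.card α * m := by
    refine (sum_le_sum fun a _ => hmax a (mem_univ a)).trans_eq ?_
    rw [sum_const, card_univ, smul_eq_mul]
  have h₂ : ∑ a, #{b | v b = v a} ≤ m * m + m' * m' := by
    rw [← sum_filter_add_sum_filter_not univ (fun a => v a = v a₀)]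
    gcongr
    · rw [sum_congr rfl fun a ha => by rw [(mem_filter.1 ha).2], sum_const, smul_eq_mul]
    · refine (sum_le_card_nsmul _ _ m' fun a ha => card_le_card fun b hb => ?_).trans_eq
        (smul_eq_mul _ _)
      simp only [mem_filter, mem_univ, true_and] at ha hb ⊢
      rwa [hb]
  refine ⟨v a₀, ?_⟩
  by_contra! hm
  rw [← hn] at h h₁ hm
  rcases lt_or_ge (2 * m) m' with _ | _ <;> nlinarith

end Counting

theorem MonoidHom.injective_of_injOn_of_card_lt {G H : Type*} [Group G] [MulOneClass H]
    [Fintype G] (φ : G →* H) {s : Finset G} (hs : Set.InjOn φ s)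
    (hcard : Fintype.card G < 2 * #s) : Function.Injective φ := by
  classical
  refine (injective_iff_map_eq_one φ).2 fun k hk => ?_
  have hsk : #(s.image (· * k)) = #s := card_image_of_injective s (mul_left_injective k)
  obtain ⟨a, ha⟩ := inter_nonempty_of_card_lt_card_add_card (subset_univ s)
    (subset_univ (s.image (· * k))) (by rw [card_univ, hsk]; omega)
  simp only [mem_inter, mem_image] at ha
  obtain ⟨has, b, hbs, rfl⟩ := ha
  have : b * k = b := hs has hbs (by simp [hk])
  simpa using this

section DiffQuot

variable {G H : Type*} [Group G] [Group H]

def diffQuot (γ : G → H) (x y : G) : H := (γ y)⁻¹ * γ (y * x)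

theorem diffQuot_mul (γ : G → H) (x₁ x₂ y : G) :
    diffQuot γ (x₁ * x₂) y = diffQuot γ x₁ y * diffQuot γ x₂ (y * x₁) := by
  simp [diffQuot, mul_assoc]

theorem diffQuot_eq_of_map_mul {γ : G → H} {x y : G} (h : γ (y * x) = γ y * γ x) :
    diffQuot γ x y = γ x := by
  simp [diffQuot, h]

theorem diffQuot_mul_left {γ : G → H} {t x y : G} (h₁ : γ (t * y) = γ t * γ y)
    (h₂ : γ (t * (y * x)) = γ t * γ (y * x)) : diffQuot γ x (t * y) = diffQuot γ x y := by
  rw [diffQuot, diffQuot, h₁, mul_assoc, h₂]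
  group

variable [Fintype G] [DecidableEq H]

def badPairs (γ : G → H) : Finset (G × G) := {p | γ (p.1 * p.2) ≠ γ p.1 * γ p.2}

@[simp]
theorem mem_badPairs {γ : G → H} {p : G × G} :
    p ∈ badPairs γ ↔ γ (p.1 * p.2) ≠ γ p.1 * γ p.2 := by
  simp [badPairs]

theorem card_diffQuot_ne_le (γ : G → H) (x : G) :
    #{p : G × G | diffQuot γ x (p.1 * p.2) ≠ diffQuot γ x p.2} ≤ 2 * #(badPairs γ) := by
  classical
  have hshift : #{p : G × G | γ (p.1 * (p.2 * x)) ≠ γ p.1 * γ (p.2 * x)} = #(badPairs γ) :=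
    card_equiv ((Equiv.refl G).prodCongr (Equiv.mulRight x)) (by simp)
  calc #{p : G × G | diffQuot γ x (p.1 * p.2) ≠ diffQuot γ x p.2}
      ≤ #(badPairs γ ∪
          ({p | γ (p.1 * (p.2 * x)) ≠ γ p.1 * γ (p.2 * x)} : Finset (G × G))) := by
        refine card_le_card fun p hp => ?_
        contrapose! hp
        simp only [mem_union, mem_filter, mem_univ, true_and, mem_badPairs, not_or,
          not_not] at hp ⊢
        exact diffQuot_mul_left hp.1 hp.2
    _ ≤ 2 * #(badPairs γ) := (card_union_le _ _).trans_eq (by rw [hshift, two_mul])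

theorem exists_two_mul_card_lt_three_mul_card_diffQuot {γ : G → H}
    (hbad : 9 * #(badPairs γ) < 2 * Fintype.card G ^ 2) (x : G) :
    ∃ c, 2 * Fintype.card G < 3 * #{y | diffQuot γ x y = c} := by
  refine exists_two_mul_card_lt_three_mul_card_fiber (diffQuot γ x) ?_
  have hshift : ∀ y, #{t | diffQuot γ x (t * y) = diffQuot γ x y} =
      #{z | diffQuot γ x z = diffQuot γ x y} := fun y =>
    card_equiv (Equiv.mulRight y) (by simp)
  have hsplit := card_filter_add_card_filter_not (s := univ)
    fun p : G × G => diffQuot γ x (p.1 * p.2) = diffQuot γ x p.2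
  rw [card_filter_prod_eq_sum_card (fun t y => diffQuot γ x (t * y) = diffQuot γ x y),
    card_univ, Fintype.card_prod] at hsplit
  simp only [hshift] at hsplit
  have := card_diffQuot_ne_le γ x
  nlinarith

theorem exists_monoidHom_two_mul_card_lt_three_mul_card_diffQuot {γ : G → H}
    (hbad : 9 * #(badPairs γ) < 2 * Fintype.card G ^ 2) :
    ∃ φ : G →* H, ∀ x, 2 * Fintype.card G < 3 * #{y | diffQuot γ x y = φ x} := by
  classical
  choose g hg using exists_two_mul_card_lt_three_mul_card_diffQuot hbad
  refine ⟨MonoidHom.mk' g fun x₁ x₂ => ?_, hg⟩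
  have hshift : #{y | diffQuot γ x₂ (y * x₁) = g x₂} = #{y | diffQuot γ x₂ y = g x₂} :=
    card_equiv (Equiv.mulRight x₁) (by simp)
  obtain ⟨y, h₁, h₂, h₃⟩ := exists_mem_mem_mem_of_two_mul_card_lt
    {y | diffQuot γ x₁ y = g x₁} {y | diffQuot γ x₂ (y * x₁) = g x₂}
    {y | diffQuot γ (x₁ * x₂) y = g (x₁ * x₂)}
    (by have := hg x₁; have := hg x₂; have := hg (x₁ * x₂); omega)
  simp only [mem_filter, mem_univ, true_and] at h₁ h₂ h₃
  rw [← h₃, diffQuot_mul, h₁, h₂]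

theorem two_mul_card_lt_three_mul_card_eq {γ : G → H}
    (hbad : 9 * #(badPairs γ) < 2 * Fintype.card G ^ 2) {φ : G →* H}
    (hφ : ∀ x, 2 * Fintype.card G < 3 * #{y | diffQuot γ x y = φ x}) :
    2 * Fintype.card G < 3 * #{x | φ x = γ x} := by
  classical
  set n := Fintype.card G
  set A : Finset G := {x | n < 3 * #{y | γ (y * x) = γ y * γ x}}
  have hA : A ⊆ ({x | φ x = γ x} : Finset G) := fun x hx => by
    simp only [A, mem_filter, mem_univ, true_and] at hx ⊢
    have : #{y | γ (y * x) = γ y * γ x} ≤ #{y | diffQuot γ x y = γ x} :=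
      card_le_card fun y hy => by simpa using diffQuot_eq_of_map_mul (by simpa using hy)
    exact (eq_of_card_lt_card_fiber_add_card_fiber (diffQuot γ x) (b := γ x) (c := φ x)
      (by have := hφ x; omega)).symm
  have hAc : #Aᶜ * (2 * n) ≤ 3 * #(badPairs γ) :=
    calc #Aᶜ * (2 * n) ≤ ∑ x ∈ Aᶜ, 3 * #{y | γ (y * x) ≠ γ y * γ x} := by
          refine card_nsmul_le_sum _ _ _ fun x hx => ?_
          have := card_filter_add_card_filter_not (s := univ) fun y => γ (y * x) = γ y * γ x
          simp only [A, mem_compl, mem_filter, mem_univ, true_and, not_lt, card_univ, ← ne_eq]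
            at hx this
          omega
      _ ≤ ∑ x, 3 * #{y | γ (y * x) ≠ γ y * γ x} := sum_le_sum_of_subset (subset_univ _)
      _ = 3 * #(badPairs γ) := by
          rw [← mul_sum, ← card_filter_prod_eq_sum_card fun y x => γ (y * x) ≠ γ y * γ x]
          rfl
  have hpos : 0 < n := Fintype.card_pos_iff.2 ⟨1⟩
  have hsplit := card_add_card_compl A
  have := card_le_card hA
  nlinarith

end DiffQuot

theorem non_embeddable_far_from_hom_general (G H : Type*) [Group G] [Group H] [Finite G]
    (hiso : ∀ K : Subgroup H, ¬ Nonempty (G ≃* K))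
    (γ : G → H) (hγ : Function.Injective γ) :
    9 * Nat.card {q : G × G // γ (q.1 * q.2) = γ q.1 * γ q.2} ≤ 7 * (Nat.card G) ^ 2 := by
  classical
  cases nonempty_fintype G
  by_contra! hmany
  have hbad : 9 * #(badPairs γ) < 2 * Fintype.card G ^ 2 := by
    have := card_filter_add_card_filter_not (s := univ)
      fun p : G × G => γ (p.1 * p.2) = γ p.1 * γ p.2
    rw [card_univ, Fintype.card_prod, ← sq] at this
    simp only [Nat.card_eq_fintype_card, Fintype.card_subtype] at hmany
    simp only [badPairs, ne_eq]
    omega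
  obtain ⟨φ, hφ⟩ := exists_monoidHom_two_mul_card_lt_three_mul_card_diffQuot hbad
  have hinj : Function.Injective φ := by
    refine φ.injective_of_injOn_of_card_lt (s := {x | φ x = γ x}) (fun a ha b hb hab => ?_)
      (by have := two_mul_card_lt_three_mul_card_eq hbad hφ; omega)
    simp only [coe_filter, mem_univ, true_and, Set.mem_ofPred_eq] at ha hb
    exact hγ (by rw [← ha, ← hb, hab])
  exact hiso φ.range ⟨MonoidHom.ofInjective hinj⟩

theorem non_embeddable_far_from_hom (G H : Type*) [Group G] [Group H] [Finite G] [Finite H]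
    (hcard : Nat.card G ≤ Nat.card H)
    (hiso : ∀ K : Subgroup H, ¬ Nonempty (G ≃* K))
    (γ : G → H) (hγ : Function.Injective γ) :
    9 * Nat.card {q : G × G // γ (q.1 * q.2) = γ q.1 * γ q.2} ≤ 7 * (Nat.card G) ^ 2 :=
  non_embeddable_far_from_hom_general G H hiso γ hγ
end

section
/- Let G be a finite group, (Γ, ∘) a magma with |Γ| = |G|, f : G → Γ a map, and 0 ≤ η < 1/120. If the number of pairs (x,y) ∈ G × G with f(xy) ≠ f(x) ∘ f(y) is at most η|G|^2, and for every nontrivial subgroup H of G there exist distinct x, y ∈ H such that |{u ∈ G : f(xu) = f(yu)}| ≤ |G|/2, then there is a binary operation ∗ on Γ making (Γ, ∗) a group isomorphic to G, with |{(α,β) ∈ Γ × Γ : α ∘ β ≠ α ∗ β}| ≤ 46η|G|^2. -/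
/-!
Let `n = |G|` and let `p` be the number of defect pairs `(x, y)` with `f (x * y) ≠ f x ∘ f y`.
The agreement `N(a, b) = #{u | f (a * u) = f (b * u)}` satisfies `N (n - N) ≤ 2 p`: if
`f (a * u) = f (b * u)` but `f (a * w) ≠ f (b * w)`, then one of `(a * u, u⁻¹ * w)` and
`(b * u, u⁻¹ * w)` is a defect pair, and each of these two reparametrisations of `G × G` is a
bijection. So an agreement is either close to `n` or close to `0`. When `16 p < n²` the elements
`c` with `N(c, 1) > n / 2` therefore form a subgroup, which the separation hypothesis forces to be
trivial. Hence distinct points have agreement at most `4 p / n`, and `f` is injective off the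
at most `4 p / n` elements whose row carries more than `n / 4` defects. Extending `f` from there
to a bijection `φ : G ≃ Γ` and transporting the multiplication of `G` along `φ` gives a group
operation which differs from `∘` on at most `p + 3 · 4 p = 13 p` pairs.
-/

open Finset

lemma card_filter_shear {G : Type*} [Group G] [Fintype G] {p : G × G → Prop} [DecidablePred p]
    (a : G) : #{z : G × G | p (a * z.1, z.1⁻¹ * z.2)} = #{z | p z} :=
  card_equiv (Equiv.prodShear (Equiv.mulLeft a) fun u => Equiv.mulLeft u⁻¹) (by simp)

lemma exists_equiv_eq_of_injOn {α β : Type*} [Fintype α] [Fintype β]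
    (hcard : Fintype.card α = Fintype.card β) {f : α → β} {s : Set α} (hf : s.InjOn f) :
    ∃ g : α ≃ β, ∀ x ∈ s, g x = f x := by
  obtain ⟨g, hg⟩ := Set.MapsTo.exists_equiv_extend_of_card_eq (t := univ)
    (hcard.trans card_univ.symm) (fun _ _ => mem_coe.2 (mem_univ _)) hf
  exact ⟨g.trans (Equiv.subtypeUnivEquiv mem_univ), hg⟩

section

variable {G Γ : Type*} [Group G] [Fintype G] [DecidableEq Γ]

def agreement (f : G → Γ) (a b : G) : ℕ := #{u | f (a * u) = f (b * u)}

def defectPairs (op : Γ → Γ → Γ) (f : G → Γ) : Finset (G × G) :=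
  {q | f (q.1 * q.2) ≠ op (f q.1) (f q.2)}

def defectRow (op : Γ → Γ → Γ) (f : G → Γ) (x : G) : Finset G :=
  {y | f (x * y) ≠ op (f x) (f y)}

def heavyRows (op : Γ → Γ → Γ) (f : G → Γ) : Finset G :=
  {x | Fintype.card G < 4 * #(defectRow op f x)}

variable (f : G → Γ)

lemma natCard_eq_agreement (a b : G) :
    Nat.card {u : G // f (a * u) = f (b * u)} = agreement f a b := by
  rw [Nat.card_eq_fintype_card, Fintype.card_subtype]; rfl

lemma agreement_le_card (a b : G) : agreement f a b ≤ Fintype.card G :=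
  card_le_univ _

lemma agreement_self (a : G) : agreement f a a = Fintype.card G := by
  simp [agreement]

lemma agreement_comm (a b : G) : agreement f a b = agreement f b a := by
  simp only [agreement, eq_comm]

lemma agreement_mul_right (a b g : G) : agreement f (a * g) (b * g) = agreement f a b :=
  card_equiv (Equiv.mulLeft g) (by simp [mul_assoc])

lemma agreement_eq_agreement_mul_inv_one (a b : G) :
    agreement f a b = agreement f (a * b⁻¹) 1 := by
  rw [← agreement_mul_right f (a * b⁻¹) 1 b, inv_mul_cancel_right, one_mul]

lemma agreement_add_agreement_le (a b c : G) :
    agreement f a b + agreement f b c ≤ agreement f a c + Fintype.card G := by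
  classical
  set s : Finset G := {u | f (a * u) = f (b * u)}
  set t : Finset G := {u | f (b * u) = f (c * u)}
  have hsub : s ∩ t ⊆ ({u | f (a * u) = f (c * u)} : Finset G) := by
    intro u
    simp only [s, t, mem_inter, mem_filter_univ]
    exact fun h => h.1.trans h.2
  calc agreement f a b + agreement f b c = #(s ∩ t) + #(s ∪ t) :=
        (card_inter_add_card_union s t).symm
    _ ≤ agreement f a c + Fintype.card G := add_le_add (card_le_card hsub) (card_le_univ _)

variable (op : Γ → Γ → Γ)

lemma natCard_eq_card_defectPairs :
    Nat.card {q : G × G // f (q.1 * q.2) ≠ op (f q.1) (f q.2)} = #(defectPairs op f) := by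
  rw [Nat.card_eq_fintype_card, Fintype.card_subtype]; rfl

lemma natCard_ne_mul_eq_card_defectPairs [Group Γ] (φ : G ≃ Γ)
    (hφ : ∀ x y, φ (x * y) = φ x * φ y) :
    Nat.card {q : Γ × Γ // op q.1 q.2 ≠ q.1 * q.2} = #(defectPairs op φ) := by
  rw [← natCard_eq_card_defectPairs]
  exact Nat.card_congr (Equiv.subtypeEquiv (φ.prodCongr φ) fun q => by simp [hφ, ne_comm]).symm

lemma sum_card_defectRow : ∑ x, #(defectRow op f x) = #(defectPairs op f) := by
  simp only [defectRow, defectPairs, card_filter, Fintype.sum_prod_type]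

lemma agreement_mul_card_sub_le (a b : G) :
    agreement f a b * (Fintype.card G - agreement f a b) ≤ 2 * #(defectPairs op f) := by
  classical
  set A : Finset G := {u | f (a * u) = f (b * u)}
  have hsub : A ×ˢ Aᶜ ⊆ ({z : G × G | (a * z.1, z.1⁻¹ * z.2) ∈ defectPairs op f} : Finset _) ∪
      ({z : G × G | (b * z.1, z.1⁻¹ * z.2) ∈ defectPairs op f} : Finset _) := by
    rintro ⟨u, w⟩ huw
    simp only [A, mem_product, mem_compl, mem_filter_univ] at huw
    simp only [defectPairs, mem_union, mem_filter_univ, mul_assoc, mul_inv_cancel_left]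
    by_contra! h
    exact huw.2 (by rw [h.1, h.2, huw.1])
  calc agreement f a b * (Fintype.card G - agreement f a b) = #(A ×ˢ Aᶜ) := by
        rw [card_product, card_compl]; rfl
    _ ≤ _ := (card_le_card hsub).trans (card_union_le _ _)
    _ = 2 * #(defectPairs op f) := by
        rw [card_filter_shear (p := (· ∈ defectPairs op f)),
          card_filter_shear (p := (· ∈ defectPairs op f)), filter_mem_eq_inter, univ_inter, two_mul]

lemma card_sub_agreement_mul_card_le {a b : G} (h : Fintype.card G < 2 * agreement f a b) :
    (Fintype.card G - agreement f a b) * Fintype.card G ≤ 4 * #(defectPairs op f) := by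
  have := agreement_mul_card_sub_le f op a b
  calc (Fintype.card G - agreement f a b) * Fintype.card G
      ≤ (Fintype.card G - agreement f a b) * (2 * agreement f a b) := by gcongr
    _ ≤ 4 * #(defectPairs op f) := by linarith

lemma agreement_mul_card_le {a b : G} (h : 2 * agreement f a b ≤ Fintype.card G) :
    agreement f a b * Fintype.card G ≤ 4 * #(defectPairs op f) := by
  have := agreement_mul_card_sub_le f op a b
  calc agreement f a b * Fintype.card G
      ≤ agreement f a b * (2 * (Fintype.card G - agreement f a b)) := by gcongr; omega
    _ ≤ 4 * #(defectPairs op f) := by linarith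

def popularSubgroup (hP : 16 * #(defectPairs op f) < Fintype.card G ^ 2) : Subgroup G where
  carrier := {c | Fintype.card G < 2 * agreement f c 1}
  one_mem' := by
    simp only [Set.mem_ofPred_eq, agreement_self]
    linarith [Fintype.card_pos (α := G)]
  inv_mem' {c} hc := by
    rwa [Set.mem_ofPred_eq, ← one_mul c⁻¹, ← agreement_eq_agreement_mul_inv_one, agreement_comm]
  mul_mem' {c d} hc hd := by
    simp only [Set.mem_ofPred_eq] at hc hd ⊢
    have hcd := agreement_add_agreement_le f (c * d) d 1
    rw [agreement_eq_agreement_mul_inv_one f (c * d), mul_inv_cancel_right] at hcd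
    have hc' := card_sub_agreement_mul_card_le f op hc
    have hd' := card_sub_agreement_mul_card_le f op hd
    -- `n - N(cd, 1) ≤ (n - N(c, 1)) + (n - N(d, 1)) ≤ 8 p / n < n / 2`
    zify [agreement_le_card] at hc' hd'
    nlinarith

lemma popularSubgroup_eq_bot (hP : 16 * #(defectPairs op f) < Fintype.card G ^ 2)
    (hsep : ∀ H : Subgroup G, H ≠ ⊥ → ∃ x ∈ H, ∃ y ∈ H, 2 * agreement f x y ≤ Fintype.card G) :
    popularSubgroup f op hP = ⊥ := by
  by_contra hne
  obtain ⟨x, hx, y, hy, hxy⟩ := hsep _ hne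
  have : Fintype.card G < 2 * agreement f (x * y⁻¹) 1 :=
    (popularSubgroup f op hP).mul_mem hx ((popularSubgroup f op hP).inv_mem hy)
  rw [← agreement_eq_agreement_mul_inv_one] at this
  omega

lemma two_mul_agreement_le_of_ne (hP : 16 * #(defectPairs op f) < Fintype.card G ^ 2)
    (hsep : ∀ H : Subgroup G, H ≠ ⊥ → ∃ x ∈ H, ∃ y ∈ H, 2 * agreement f x y ≤ Fintype.card G)
    {a b : G} (hab : a ≠ b) :
    2 * agreement f a b ≤ Fintype.card G := by
  by_contra! h
  rw [agreement_eq_agreement_mul_inv_one] at h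
  have : a * b⁻¹ ∈ popularSubgroup f op hP := h
  rw [popularSubgroup_eq_bot f op hP hsep, Subgroup.mem_bot, mul_inv_eq_one] at this
  exact hab this

lemma card_le_agreement_add_of_eq {a b : G} (hab : f a = f b) :
    Fintype.card G ≤ agreement f a b + #(defectRow op f a) + #(defectRow op f b) := by
  classical
  have hsub : (univ : Finset G) ⊆
      ({u | f (a * u) = f (b * u)} : Finset G) ∪ defectRow op f a ∪ defectRow op f b := by
    intro u _
    simp only [defectRow, mem_union, mem_filter_univ]
    by_contra! h
    exact h.1.1 (by rw [h.1.2, h.2, hab])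
  calc Fintype.card G ≤ _ := card_le_card hsub
    _ ≤ #(({u | f (a * u) = f (b * u)} : Finset G) ∪ defectRow op f a) + #(defectRow op f b) :=
        card_union_le _ _
    _ ≤ _ := by gcongr; exact card_union_le _ _

lemma injOn_compl_heavyRows (hP : 8 * #(defectPairs op f) < Fintype.card G ^ 2)
    (hsep : ∀ a b : G, a ≠ b → 2 * agreement f a b ≤ Fintype.card G) :
    Set.InjOn f (↑(heavyRows op f))ᶜ := by
  intro a ha b hb hfab
  by_contra hne
  have hab := hsep a b hne
  have := agreement_mul_card_le f op hab
  have := card_le_agreement_add_of_eq f op hfab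
  simp only [heavyRows, coe_filter, mem_univ, true_and, Set.mem_compl_iff, Set.mem_ofPred_eq,
    not_lt] at ha hb
  nlinarith

lemma card_heavyRows_mul_card_le :
    #(heavyRows op f) * Fintype.card G ≤ 4 * #(defectPairs op f) :=
  calc #(heavyRows op f) * Fintype.card G
      ≤ ∑ x ∈ heavyRows op f, 4 * #(defectRow op f x) :=
        card_nsmul_le_sum _ _ _ fun x hx => (mem_filter.1 hx).2.le
    _ ≤ ∑ x, 4 * #(defectRow op f x) := sum_le_sum_of_subset (subset_univ _)
    _ = 4 * #(defectPairs op f) := by rw [← mul_sum, sum_card_defectRow]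

lemma card_defectPairs_le_of_eqOn (g : G → Γ) (B : Finset G) (hgf : ∀ x ∉ B, g x = f x) :
    #(defectPairs op g) ≤ #(defectPairs op f) + 3 * (#B * Fintype.card G) := by
  classical
  set D : Finset (G × G) := {q | q.1 * q.2 ∈ B}
  have hsub : defectPairs op g ⊆ defectPairs op f ∪ B ×ˢ univ ∪ univ ×ˢ B ∪ D := by
    rintro ⟨x, y⟩ hxy
    simp only [D, defectPairs, mem_union, mem_product, mem_filter_univ, mem_univ, and_true,
      true_and] at hxy ⊢
    by_contra! h
    rw [hgf _ h.1.1.2, hgf _ h.1.2, hgf _ h.2] at hxy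
    exact hxy h.1.1.1
  have hD : #D = #(univ ×ˢ B) :=
    card_equiv (Equiv.prodShear (Equiv.refl G) Equiv.mulLeft) (by simp [D])
  calc #(defectPairs op g) ≤ _ := card_le_card hsub
    _ ≤ #(defectPairs op f ∪ B ×ˢ univ ∪ univ ×ˢ B) + #D := card_union_le _ _
    _ ≤ #(defectPairs op f ∪ B ×ˢ univ) + #(univ ×ˢ B) + #D := by
        gcongr; exact card_union_le _ _
    _ ≤ #(defectPairs op f) + #(B ×ˢ univ) + #(univ ×ˢ B) + #D := by
        gcongr; exact card_union_le _ _
    _ = _ := by rw [hD, card_product, card_product, card_univ]; ring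

lemma exists_equiv_card_defectPairs_le [Fintype Γ] (hcard : Fintype.card Γ = Fintype.card G)
    (hP : 16 * #(defectPairs op f) < Fintype.card G ^ 2)
    (hsep : ∀ H : Subgroup G, H ≠ ⊥ → ∃ x ∈ H, ∃ y ∈ H, 2 * agreement f x y ≤ Fintype.card G) :
    ∃ φ : G ≃ Γ, #(defectPairs op φ) ≤ 13 * #(defectPairs op f) := by
  have hsep' (a b : G) : a ≠ b → 2 * agreement f a b ≤ Fintype.card G :=
    two_mul_agreement_le_of_ne f op hP hsep
  obtain ⟨φ, hφ⟩ := exists_equiv_eq_of_injOn hcard.symm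
    (injOn_compl_heavyRows f op (by omega) hsep')
  have := card_defectPairs_le_of_eqOn f op φ (heavyRows op f) fun x hx => hφ x hx
  have := card_heavyRows_mul_card_le f op
  exact ⟨φ, by omega⟩

end

theorem close_operation_gives_group_general {G Γ : Type*} [Group G] [Finite G] [Finite Γ]
    (op : Γ → Γ → Γ) (hcard : Nat.card Γ = Nat.card G) (f : G → Γ)
    (η : ℝ) (hη : η < 1 / 120)
    (h1 : (Nat.card {q : G × G // f (q.1 * q.2) ≠ op (f q.1) (f q.2)} : ℝ) ≤
      η * (Nat.card G : ℝ) ^ 2)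
    (h2 : ∀ H : Subgroup G, H ≠ ⊥ → ∃ x ∈ H, ∃ y ∈ H, x ≠ y ∧
      (Nat.card {u : G // f (x * u) = f (y * u)} : ℝ) ≤ (Nat.card G : ℝ) / 2) :
    ∃ (star : Γ → Γ → Γ) (e : Γ) (inv : Γ → Γ),
      (∀ a b c : Γ, star (star a b) c = star a (star b c)) ∧
      (∀ a, star e a = a) ∧ (∀ a, star a e = a) ∧
      (∀ a, star (inv a) a = e) ∧
      (∃ φ : G → Γ, Function.Bijective φ ∧ ∀ x y, φ (x * y) = star (φ x) (φ y)) ∧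
      (Nat.card {q : Γ × Γ // op q.1 q.2 ≠ star q.1 q.2} : ℝ) ≤
        46 * η * (Nat.card G : ℝ) ^ 2 := by
  classical
  have := Fintype.ofFinite G
  have := Fintype.ofFinite Γ
  rw [Nat.card_eq_fintype_card (α := G)] at h1 h2 ⊢
  rw [natCard_eq_card_defectPairs] at h1
  have hn : (0 : ℝ) < Fintype.card G := Nat.cast_pos.2 Fintype.card_pos
  have hP : 16 * #(defectPairs op f) < Fintype.card G ^ 2 := by
    exact_mod_cast (show (16 * #(defectPairs op f) : ℝ) < Fintype.card G ^ 2 by nlinarith)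
  have hsep (H : Subgroup G) (hH : H ≠ ⊥) :
      ∃ x ∈ H, ∃ y ∈ H, 2 * agreement f x y ≤ Fintype.card G := by
    obtain ⟨x, hx, y, hy, -, hle⟩ := h2 H hH
    rw [natCard_eq_agreement] at hle
    refine ⟨x, hx, y, hy, ?_⟩
    exact_mod_cast (by linarith : (2 * agreement f x y : ℝ) ≤ Fintype.card G)
  obtain ⟨φ, hφ⟩ := exists_equiv_card_defectPairs_le f op
    (by rwa [Nat.card_eq_fintype_card, Nat.card_eq_fintype_card] at hcard) hP hsep
  let : Group Γ := φ.symm.group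
  have hφ_mul : ∀ x y, φ (x * y) = φ x * φ y := map_mul φ.symm.mulEquiv.symm
  refine ⟨(· * ·), 1, (·⁻¹), mul_assoc, one_mul, mul_one, inv_mul_cancel,
    ⟨φ, φ.bijective, hφ_mul⟩, ?_⟩
  rw [natCard_ne_mul_eq_card_defectPairs op φ hφ_mul]
  have : (#(defectPairs op φ) : ℝ) ≤ 13 * #(defectPairs op f) := by exact_mod_cast hφ
  nlinarith

theorem close_operation_gives_group {G Γ : Type*} [Group G] [Finite G] [Finite Γ]
    (op : Γ → Γ → Γ) (hcard : Nat.card Γ = Nat.card G) (f : G → Γ)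
    (η : ℝ) (hη0 : 0 ≤ η) (hη : η < 1 / 120)
    (h1 : (Nat.card {q : G × G // f (q.1 * q.2) ≠ op (f q.1) (f q.2)} : ℝ) ≤
      η * (Nat.card G : ℝ) ^ 2)
    (h2 : ∀ H : Subgroup G, H ≠ ⊥ → ∃ x ∈ H, ∃ y ∈ H, x ≠ y ∧
      (Nat.card {u : G // f (x * u) = f (y * u)} : ℝ) ≤ (Nat.card G : ℝ) / 2) :
    ∃ (star : Γ → Γ → Γ) (e : Γ) (inv : Γ → Γ),
      (∀ a b c : Γ, star (star a b) c = star a (star b c)) ∧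
      (∀ a, star e a = a) ∧ (∀ a, star a e = a) ∧
      (∀ a, star (inv a) a = e) ∧
      (∃ φ : G → Γ, Function.Bijective φ ∧ ∀ x y, φ (x * y) = star (φ x) (φ y)) ∧
      (Nat.card {q : Γ × Γ // op q.1 q.2 ≠ star q.1 q.2} : ℝ) ≤
        46 * η * (Nat.card G : ℝ) ^ 2 :=
  close_operation_gives_group_general op hcard f η hη h1 h2
end

section
/- Let G be a finite group, (Γ, ∘) a magma, and f : G → Γ a map such that Pr_{x,y∈G}[f(xy) = f(x)∘f(y)] ≥ 1 - η for some η < 1/120. Call x ∈ G well-behaving if Pr_{u∈G}[f(xu) = f(x)∘f(u)] ≥ 4/5 and Pr_{u∈G}[(f(x)∘f(u))∘f(u^{-1}) = f(x)] ≥ 4/5. Then the fraction of elements of G that are not well-behaving is at most 15η. -/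
/-!
Call a pair `(x, y)` bad when `f (x * y) ≠ f x ∘ f y`; at most `η n²` pairs are bad, where
`n = |G|`. If `(x, u)` and `(x * u, u⁻¹)` are both good, then
`(f x ∘ f u) ∘ f u⁻¹ = f (x * u) ∘ f u⁻¹ = f x`, and `(x, u) ↦ (x * u, u⁻¹)` is a bijection of
`G × G`, so the cancellation fails on at most `2 η n²` pairs. By Markov's inequality at most
`5 η n` elements `x` violate the first condition for more than `n / 5` of the `u`, and at most
`10 η n` violate the second.
-/

open Finset

section Counting

variable {α β : Type*}

theorem Nat.card_subtype_add_card_subtype_not [Finite α] (p : α → Prop) :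
    Nat.card {a // p a} + Nat.card {a // ¬ p a} = Nat.card α :=
  Set.ncard_add_ncard_compl {a | p a}

theorem Nat.card_sub_lt_card_subtype_not [Finite α] {p : α → Prop} {s : ℝ}
    (h : (Nat.card {a // p a} : ℝ) < s) : (Nat.card α : ℝ) - s < Nat.card {a // ¬ p a} := by
  have hsum := congrArg (Nat.cast (R := ℝ)) (Nat.card_subtype_add_card_subtype_not p)
  push_cast at hsum
  linarith

theorem Nat.card_subtype_mono [Finite α] {p q : α → Prop} (h : ∀ a, p a → q a) :
    Nat.card {a // p a} ≤ Nat.card {a // q a} :=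
  Set.ncard_le_ncard (s := {a | p a}) (t := {a | q a}) h

theorem Nat.card_subtype_or_le (p q : α → Prop) :
    Nat.card {a // p a ∨ q a} ≤ Nat.card {a // p a} + Nat.card {a // q a} :=
  Set.ncard_union_le {a | p a} {a | q a}

theorem Nat.card_subtype_lt_fiber_mul_le [Finite α] [Finite β] (r : α → β → Prop) (t : ℝ) :
    Nat.card {a // t < Nat.card {b // r a b}} * t ≤ Nat.card {q : α × β // r q.1 q.2} := by
  classical
  have := Fintype.ofFinite α
  rw [Nat.card_congr (Equiv.subtypeProdEquivSigmaSubtype r), Nat.card_sigma, Nat.cast_sum,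
    Nat.card_eq_fintype_card, Fintype.card_subtype, ← nsmul_eq_mul]
  calc _ ≤ ∑ a ∈ univ.filter (fun a => t < Nat.card {b // r a b}), (Nat.card {b // r a b} : ℝ) :=
        card_nsmul_le_sum _ _ _ fun a ha => (mem_filter.1 ha).2.le
    _ ≤ ∑ a, (Nat.card {b // r a b} : ℝ) :=
        sum_le_sum_of_subset_of_nonneg (subset_univ _) fun _ _ _ => Nat.cast_nonneg _

end Counting

section Magma

variable {G Γ : Type*} [Group G] (op : Γ → Γ → Γ) (f : G → Γ)

theorem card_apply_ne_op_mul_inv_eq_card_mul_ne_op :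
    Nat.card {q : G × G // f q.1 ≠ op (f (q.1 * q.2)) (f q.2⁻¹)} =
      Nat.card {q : G × G // f (q.1 * q.2) ≠ op (f q.1) (f q.2)} := by
  let e : G × G ≃ G × G :=
    Function.Involutive.toPerm (fun q => (q.1 * q.2, q.2⁻¹)) fun q => by simp
  exact Nat.card_congr (e.subtypeEquiv fun q => by simp [e, Function.Involutive.toPerm])

theorem card_op_op_inv_ne_le_two_mul [Finite G] :
    Nat.card {q : G × G // op (op (f q.1) (f q.2)) (f q.2⁻¹) ≠ f q.1} ≤
      2 * Nat.card {q : G × G // f (q.1 * q.2) ≠ op (f q.1) (f q.2)} := by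
  have hsplit : ∀ q : G × G, op (op (f q.1) (f q.2)) (f q.2⁻¹) ≠ f q.1 →
      f (q.1 * q.2) ≠ op (f q.1) (f q.2) ∨ f q.1 ≠ op (f (q.1 * q.2)) (f q.2⁻¹) := by
    intro q hq
    by_contra! h
    exact hq (by rw [← h.1, ← h.2])
  calc _ ≤ _ := Nat.card_subtype_mono hsplit
    _ ≤ _ := Nat.card_subtype_or_le _ _
    _ = _ := by rw [card_apply_ne_op_mul_inv_eq_card_mul_ne_op, two_mul]

end Magma

theorem most_elements_well_behaving_general {G Γ : Type*} [Group G] [Finite G]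
    (op : Γ → Γ → Γ) (f : G → Γ) (η : ℝ)
    (h1 : (1 - η) * (Nat.card G : ℝ) ^ 2 ≤
      (Nat.card {q : G × G // f (q.1 * q.2) = op (f q.1) (f q.2)} : ℝ)) :
    (Nat.card {x : G //
        ¬ ((4 / 5 : ℝ) * (Nat.card G : ℝ) ≤
              (Nat.card {u : G // f (x * u) = op (f x) (f u)} : ℝ) ∧
            (4 / 5 : ℝ) * (Nat.card G : ℝ) ≤
              (Nat.card {u : G // op (op (f x) (f u)) (f u⁻¹) = f x} : ℝ))} : ℝ)
      ≤ 15 * η * (Nat.card G : ℝ) := by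
  set n : ℝ := (Nat.card G : ℝ)
  have hn : 0 < n := Nat.cast_pos.2 Nat.card_pos
  have hbad : (Nat.card {q : G × G // f (q.1 * q.2) ≠ op (f q.1) (f q.2)} : ℝ) ≤ η * n ^ 2 := by
    have h := congrArg (Nat.cast (R := ℝ)) (Nat.card_subtype_add_card_subtype_not
      fun q : G × G => f (q.1 * q.2) = op (f q.1) (f q.2))
    push_cast [Nat.card_prod] at h
    linarith
  have hmul := Nat.card_subtype_lt_fiber_mul_le (fun x u => f (x * u) ≠ op (f x) (f u)) (n / 5)
  have hinv := (Nat.card_subtype_lt_fiber_mul_le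
    (fun x u => op (op (f x) (f u)) (f u⁻¹) ≠ f x) (n / 5)).trans
    (Nat.cast_le.2 (card_op_op_inv_ne_le_two_mul op f))
  have hsplit : ∀ x : G, ¬ ((4 / 5 : ℝ) * n ≤ Nat.card {u : G // f (x * u) = op (f x) (f u)} ∧
      (4 / 5 : ℝ) * n ≤ Nat.card {u : G // op (op (f x) (f u)) (f u⁻¹) = f x}) →
      n / 5 < Nat.card {u : G // f (x * u) ≠ op (f x) (f u)} ∨
      n / 5 < Nat.card {u : G // op (op (f x) (f u)) (f u⁻¹) ≠ f x} := by
    intro x hx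
    rw [not_and_or, not_le, not_le] at hx
    refine hx.imp (fun h => ?_) (fun h => ?_) <;> linarith [Nat.card_sub_lt_card_subtype_not h]
  have hcard := Nat.cast_le (α := ℝ).2
    ((Nat.card_subtype_mono hsplit).trans (Nat.card_subtype_or_le _ _))
  push_cast at hcard hinv
  nlinarith

theorem most_elements_well_behaving {G Γ : Type*} [Group G] [Finite G]
    (op : Γ → Γ → Γ) (f : G → Γ) (η : ℝ) (hη : η < 1 / 120)
    (h1 : (1 - η) * (Nat.card G : ℝ) ^ 2 ≤
      (Nat.card {q : G × G // f (q.1 * q.2) = op (f q.1) (f q.2)} : ℝ)) :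
    (Nat.card {x : G //
        ¬ ((4 / 5 : ℝ) * (Nat.card G : ℝ) ≤
              (Nat.card {u : G // f (x * u) = op (f x) (f u)} : ℝ) ∧
            (4 / 5 : ℝ) * (Nat.card G : ℝ) ≤
              (Nat.card {u : G // op (op (f x) (f u)) (f u⁻¹) = f x} : ℝ))} : ℝ)
      ≤ 15 * η * (Nat.card G : ℝ) :=
  most_elements_well_behaving_general op f η h1
end
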